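/- Let $X_1, \dots, X_n$ be independent Bernoulli random variables with $\mathbb{P}(X_i = 1) = p_i$, $S_n = \sum_{i=1}^n X_i$, $\lambda = \sum_{i=1}^n p_i > 0$, and $N_\lambda \sim \mathrm{Poi}(\lambda)$. Then $d_{TV}(S_n, N_\lambda) \le \frac{\sum_{i=1}^n p_i^2}{\max(1, \lambda)}$. -/

import Mathlib

/-- The Poisson pmf with parameter `l`. -/
noncomputable def poissonPMF (l : ℝ) (k : ℕ) : ℝ :=
  Real.exp (-l) * l ^ k / (Nat.factorial k)

/-- Total variation distance between two distributions on `ℕ` (given by their pmfs). -/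
noncomputable def dTV (p q : ℕ → ℝ) : ℝ := (1 / 2) * ∑' k : ℕ, |p k - q k|

/-- Convolution of two pmfs on `ℕ`: the distribution of the sum of independent rvs. -/
noncomputable def conv (p q : ℕ → ℝ) : ℕ → ℝ :=
  fun k => ∑ j ∈ Finset.range (k + 1), p j * q (k - j)

/-- The pmf of the constant random variable `0`. -/
noncomputable def delta0 : ℕ → ℝ := fun k => if k = 0 then 1 else 0

/-- Distribution of the sum `S_n = X_1 + ⋯ + X_n` of independent rvs with pmfs `p i`. -/
noncomputable def convN {n : ℕ} (p : Fin n → ℕ → ℝ) : ℕ → ℝ :=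
  (List.ofFn p).foldr conv delta0

/-!
Stein–Chen method. Let `W` be the Bernoulli sum, `π` the Poisson(l) pmf and `A = {π < P_W}`,
so that `dTV = P(W ∈ A) - π(A)`. If `g_A` solves the Stein equation
`l g(k + 1) - k g(k) = 1_A(k) - π(A)`, this equals `E[l g_A(W + 1) - W g_A(W)]`. Splitting off one
summand `X ~ Bernoulli(q)` from `W = X + W'` expresses this Stein discrepancy through two
discrepancies of `W'` and `q² E[Δg(W' + 1)]`, so by induction it is at most `∑ pᵢ² · sup |Δg|`.
Finally (Barbour–Hall) `g_A` is the sum of the solutions `g_i` for the singletons `{i}`, whose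
increments at `k` are `≤ 0` for `i ≠ k`, sum to `0` over all `i`, and are at most `(1 - e^{-l}) / l`
for `i = k`; hence `|Δg_A| ≤ (1 - e^{-l}) / l ≤ 1 / max 1 l`.
-/

open Finset

lemma succ_mul_poissonPMF_succ (l : ℝ) (k : ℕ) :
    (k + 1) * poissonPMF l (k + 1) = l * poissonPMF l k := by
  simp only [poissonPMF, Nat.factorial_succ, Nat.cast_mul, Nat.cast_succ, pow_succ]
  field_simp

lemma poissonPMF_zero (l : ℝ) : poissonPMF l 0 = Real.exp (-l) := by
  simp [poissonPMF]

noncomputable def poissonCDF (l : ℝ) (j : ℕ) : ℝ := ∑ m ∈ range (j + 1), poissonPMF l m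

lemma poissonCDF_zero (l : ℝ) : poissonCDF l 0 = Real.exp (-l) := by
  simp [poissonCDF, poissonPMF_zero]

lemma poissonCDF_succ (l : ℝ) (j : ℕ) :
    poissonCDF l (j + 1) = poissonCDF l j + poissonPMF l (j + 1) :=
  sum_range_succ _ _

section Poisson

variable {l : ℝ}

lemma hasSum_poissonPMF (hl : 0 ≤ l) : HasSum (poissonPMF l) 1 :=
  ProbabilityTheory.hasSum_one_poissonMeasure ⟨l, hl⟩

lemma poissonPMF_pos (hl : 0 < l) (k : ℕ) : 0 < poissonPMF l k := by
  unfold poissonPMF; positivity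

lemma poissonCDF_nonneg (hl : 0 < l) (j : ℕ) : 0 ≤ poissonCDF l j :=
  sum_nonneg fun m _ => (poissonPMF_pos hl m).le

lemma one_sub_poissonCDF (hl : 0 ≤ l) (j : ℕ) :
    1 - poissonCDF l j = ∑' m, poissonPMF l (m + (j + 1)) := by
  rw [← (hasSum_poissonPMF hl).tsum_eq,
    ← (hasSum_poissonPMF hl).summable.sum_add_tsum_nat_add (j + 1)]
  simp [poissonCDF]

lemma mul_poissonCDF_le (hl : 0 < l) (j : ℕ) :
    l * poissonCDF l j ≤ (j + 1) * (poissonCDF l (j + 1) - Real.exp (-l)) := by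
  have hshift :
      poissonCDF l (j + 1) - Real.exp (-l) = ∑ m ∈ range (j + 1), poissonPMF l (m + 1) := by
    rw [poissonCDF, sum_range_succ', poissonPMF_zero, add_sub_cancel_right]
  rw [hshift, poissonCDF, mul_sum, mul_sum]
  refine sum_le_sum fun m hm => ?_
  rw [← succ_mul_poissonPMF_succ]
  have : (m : ℝ) ≤ j := by exact_mod_cast Nat.le_of_lt_succ (mem_range.mp hm)
  gcongr
  exact (poissonPMF_pos hl _).le

lemma succ_mul_one_sub_poissonCDF_le (hl : 0 < l) (j : ℕ) :
    (j + 1) * (1 - poissonCDF l (j + 1)) ≤ l * (1 - poissonCDF l j) := by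
  have hsum : Summable fun m => poissonPMF l (m + (j + 1)) :=
    (summable_nat_add_iff (j + 1)).2 (hasSum_poissonPMF hl.le).summable
  have hsum' : Summable fun m => poissonPMF l (m + (j + 1 + 1)) :=
    (summable_nat_add_iff (j + 1 + 1)).2 (hasSum_poissonPMF hl.le).summable
  rw [one_sub_poissonCDF hl.le, one_sub_poissonCDF hl.le, ← tsum_mul_left, ← tsum_mul_left]
  refine Summable.tsum_le_tsum (fun m => ?_) (hsum'.mul_left _) (hsum.mul_left _)
  rw [← add_assoc, ← succ_mul_poissonPMF_succ]
  gcongr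
  · exact (poissonPMF_pos hl _).le
  · linarith [(m.cast_nonneg : (0 : ℝ) ≤ m)]

lemma poissonCDF_div_le (hl : 0 < l) (j : ℕ) :
    poissonCDF l j / (l * poissonPMF l j) ≤
      poissonCDF l (j + 1) / (l * poissonPMF l (j + 1)) := by
  rw [div_le_div_iff₀ (mul_pos hl (poissonPMF_pos hl j)) (mul_pos hl (poissonPMF_pos hl (j + 1)))]
  refine le_of_mul_le_mul_left ?_ (by positivity : (0 : ℝ) < j + 1)
  calc (j + 1) * (poissonCDF l j * (l * poissonPMF l (j + 1)))
      = (l * poissonCDF l j) * (l * poissonPMF l j) := by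
        linear_combination (poissonCDF l j * l) * succ_mul_poissonPMF_succ l j
    _ ≤ ((j + 1) * poissonCDF l (j + 1)) * (l * poissonPMF l j) := by
        refine mul_le_mul_of_nonneg_right ?_ (mul_pos hl (poissonPMF_pos hl j)).le
        linarith [mul_poissonCDF_le hl j, mul_pos (Nat.cast_add_one_pos j) (Real.exp_pos (-l))]
    _ = (j + 1) * (poissonCDF l (j + 1) * (l * poissonPMF l j)) := by ring

lemma one_sub_poissonCDF_div_le (hl : 0 < l) (j : ℕ) :
    (1 - poissonCDF l (j + 1)) / (l * poissonPMF l (j + 1)) ≤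
      (1 - poissonCDF l j) / (l * poissonPMF l j) := by
  rw [div_le_div_iff₀ (mul_pos hl (poissonPMF_pos hl (j + 1))) (mul_pos hl (poissonPMF_pos hl j))]
  refine le_of_mul_le_mul_left ?_ (by positivity : (0 : ℝ) < j + 1)
  calc (j + 1) * ((1 - poissonCDF l (j + 1)) * (l * poissonPMF l j))
      = ((j + 1) * (1 - poissonCDF l (j + 1))) * (l * poissonPMF l j) := by ring
    _ ≤ (l * (1 - poissonCDF l j)) * (l * poissonPMF l j) := by
        exact mul_le_mul_of_nonneg_right (succ_mul_one_sub_poissonCDF_le hl j)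
          (mul_pos hl (poissonPMF_pos hl j)).le
    _ = (j + 1) * ((1 - poissonCDF l j) * (l * poissonPMF l (j + 1))) := by
        linear_combination (-(1 - poissonCDF l j) * l) * succ_mul_poissonPMF_succ l j

end Poisson

lemma abs_sum_le_of_hasSum_zero {ι : Type*} [DecidableEq ι] {D : ι → ℝ} (hD : HasSum D 0)
    {k : ι} (hk : ∀ i ≠ k, D i ≤ 0) (s : Finset ι) : |∑ i ∈ s, D i| ≤ D k := by
  have hinsert (t : Finset ι) : 0 ≤ ∑ i ∈ insert k t, D i := by
    have := sum_le_hasSum (insert k t)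
      (fun i hi => neg_nonneg.2 (hk i fun h => hi (h ▸ mem_insert_self k t))) hD.neg
    simpa using this
  have hk0 : 0 ≤ D k := by simpa using hinsert ∅
  have herase : ∑ i ∈ s.erase k, D i ≤ 0 := sum_nonpos fun i hi => hk i (ne_of_mem_erase hi)
  have hs := hinsert s
  rw [abs_le]
  by_cases hks : k ∈ s
  · rw [insert_eq_of_mem hks] at hs
    rw [← add_sum_erase s D hks] at hs ⊢
    constructor <;> linarith
  · rw [sum_insert hks] at hs
    rw [erase_eq_of_notMem hks] at herase
    constructor <;> linarith

section SteinSolution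

variable {l : ℝ}

/-- Solving the Stein equation `l g (k + 1) - k g k = 1{k = i} - π i` forward from `g 0 = 0`
gives `g (j + 1) = E[(1{Z = i} - π i) 1{Z ≤ j}] / (l π j)` for `Z ~ Poisson(l)`. -/
noncomputable def steinSolution (l : ℝ) (i : ℕ) : ℕ → ℝ
  | 0 => 0
  | j + 1 => poissonPMF l i * ((if i ≤ j then 1 else 0) - poissonCDF l j) / (l * poissonPMF l j)

lemma steinSolution_succ_of_le {i j : ℕ} (h : i ≤ j) :
    steinSolution l i (j + 1) =
      poissonPMF l i * ((1 - poissonCDF l j) / (l * poissonPMF l j)) := by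
  rw [steinSolution, if_pos h, mul_div_assoc]

lemma steinSolution_succ_of_lt {i j : ℕ} (h : j < i) :
    steinSolution l i (j + 1) =
      -(poissonPMF l i * (poissonCDF l j / (l * poissonPMF l j))) := by
  rw [steinSolution, if_neg (by omega), zero_sub, mul_neg, neg_div, mul_div_assoc]

lemma mul_steinSolution_succ_sub (hl : 0 < l) (i k : ℕ) :
    l * steinSolution l i (k + 1) - k * steinSolution l i k =
      (if k = i then 1 else 0) - poissonPMF l i := by
  cases k with
  | zero =>
    rw [Nat.cast_zero, zero_mul, sub_zero]
    rcases eq_or_ne i 0 with rfl | hi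
    · rw [steinSolution_succ_of_le le_rfl, poissonCDF_zero, poissonPMF_zero, if_pos rfl]
      field_simp
    · rw [steinSolution_succ_of_lt (Nat.pos_of_ne_zero hi), poissonCDF_zero, poissonPMF_zero,
        if_neg hi.symm]
      field_simp
      ring
  | succ j =>
    have hπ := poissonPMF_pos hl j
    have hπ' := poissonPMF_pos hl (j + 1)
    have e := succ_mul_poissonPMF_succ l j
    simp only [steinSolution, poissonCDF_succ]
    push_cast
    field_simp
    rcases lt_trichotomy i (j + 1) with h | rfl | h
    · simp only [if_pos h.le, if_pos (Nat.lt_succ_iff.mp h), if_neg h.ne']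
      linear_combination (-(poissonPMF l i) * (1 - poissonCDF l j)) * e
    · simp only [le_refl, if_true, if_neg (Nat.not_succ_le_self j)]
      linear_combination (-(poissonPMF l (j + 1)) * (0 - poissonCDF l j)) * e
    · simp only [if_neg (not_le.2 h), if_neg (not_le.2 (Nat.lt_of_succ_lt h)), if_neg h.ne]
      linear_combination (-(poissonPMF l i) * (0 - poissonCDF l j)) * e

lemma hasSum_steinSolution (hl : 0 < l) (j : ℕ) : HasSum (fun i => steinSolution l i j) 0 := by
  cases j with
  | zero => exact hasSum_zero
  | succ j =>
    have hcdf : HasSum (fun i => if i ≤ j then poissonPMF l i else 0) (poissonCDF l j) := by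
      have h : HasSum (fun i => if i ≤ j then poissonPMF l i else 0)
          (∑ i ∈ range (j + 1), if i ≤ j then poissonPMF l i else 0) :=
        hasSum_sum_of_ne_finset_zero fun i hi => if_neg (by simpa [Nat.lt_succ_iff] using hi)
      rwa [sum_congr rfl fun i hi => if_pos (Nat.lt_succ_iff.mp (mem_range.mp hi))] at h
    have := (hcdf.sub ((hasSum_poissonPMF hl.le).mul_right (poissonCDF l j))).div_const
      (l * poissonPMF l j)
    simpa [steinSolution, mul_sub, ite_mul] using this

lemma steinSolution_sub_nonpos (hl : 0 < l) {i k : ℕ} (h : i ≠ k) :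
    steinSolution l i (k + 1) - steinSolution l i k ≤ 0 := by
  have hπ := poissonPMF_pos hl i
  cases k with
  | zero =>
    rw [steinSolution_succ_of_lt (Nat.pos_of_ne_zero h), steinSolution, sub_zero, neg_nonpos]
    exact mul_nonneg hπ.le
      (div_nonneg (poissonCDF_nonneg hl 0) (mul_pos hl (poissonPMF_pos hl 0)).le)
  | succ j =>
    rcases lt_or_gt_of_ne h with h | h
    · rw [steinSolution_succ_of_le (by omega), steinSolution_succ_of_le (by omega), ← mul_sub]
      exact mul_nonpos_of_nonneg_of_nonpos hπ.le (sub_nonpos.2 (one_sub_poissonCDF_div_le hl j))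
    · rw [steinSolution_succ_of_lt h, steinSolution_succ_of_lt (by omega)]
      have := mul_le_mul_of_nonneg_left (poissonCDF_div_le hl j) hπ.le
      linarith

lemma steinSolution_sub_self_le (hl : 0 < l) (k : ℕ) :
    steinSolution l k (k + 1) - steinSolution l k k ≤ (1 - Real.exp (-l)) / l := by
  have hπ := poissonPMF_pos hl k
  rw [steinSolution_succ_of_le le_rfl]
  cases k with
  | zero =>
    rw [steinSolution, sub_zero, poissonCDF_zero, poissonPMF_zero]
    exact le_of_eq (by field_simp)
  | succ j =>
    have hπ' := poissonPMF_pos hl j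
    rw [steinSolution_succ_of_lt (Nat.lt_succ_self j), sub_neg_eq_add]
    have hdiag :
        poissonPMF l (j + 1) * ((1 - poissonCDF l (j + 1)) / (l * poissonPMF l (j + 1))) =
          (1 - poissonCDF l (j + 1)) / l := by
      field_simp
    have hoff : poissonPMF l (j + 1) * (poissonCDF l j / (l * poissonPMF l j)) ≤
        (poissonCDF l (j + 1) - Real.exp (-l)) / l := by
      rw [← mul_div_assoc, div_le_div_iff₀ (by positivity) hl]
      refine le_of_mul_le_mul_left ?_ (by positivity : (0 : ℝ) < j + 1)
      have key := mul_le_mul_of_nonneg_right (mul_poissonCDF_le hl j) (mul_pos hl hπ').le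
      linear_combination key + (poissonCDF l j * l) * succ_mul_poissonPMF_succ l j
    rw [hdiag]
    linarith [show (1 - poissonCDF l (j + 1)) / l + (poissonCDF l (j + 1) - Real.exp (-l)) / l =
      (1 - Real.exp (-l)) / l by ring]

lemma mul_sum_steinSolution_succ_sub (hl : 0 < l) (A : Finset ℕ) (k : ℕ) :
    l * ∑ i ∈ A, steinSolution l i (k + 1) - k * ∑ i ∈ A, steinSolution l i k =
      (if k ∈ A then 1 else 0) - ∑ i ∈ A, poissonPMF l i := by
  rw [mul_sum, mul_sum, ← sum_sub_distrib]
  simp only [mul_steinSolution_succ_sub hl, sum_sub_distrib, sum_ite_eq]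

lemma abs_sum_steinSolution_sub_le (hl : 0 < l) (A : Finset ℕ) (k : ℕ) :
    |∑ i ∈ A, steinSolution l i (k + 1) - ∑ i ∈ A, steinSolution l i k| ≤
      (1 - Real.exp (-l)) / l := by
  have hD := (hasSum_steinSolution hl (k + 1)).sub (hasSum_steinSolution hl k)
  rw [sub_zero] at hD
  rw [← sum_sub_distrib]
  exact (abs_sum_le_of_hasSum_zero hD (fun i hi => steinSolution_sub_nonpos hl hi) A).trans
    (steinSolution_sub_self_le hl k)

end SteinSolution

noncomputable def bernoulliPMF (q : ℝ) : ℕ → ℝ :=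
  fun k => if k = 0 then 1 - q else if k = 1 then q else 0

lemma conv_bernoulliPMF_zero (q : ℝ) (Q : ℕ → ℝ) :
    conv (bernoulliPMF q) Q 0 = (1 - q) * Q 0 := by
  simp [conv, bernoulliPMF]

lemma conv_bernoulliPMF_succ (q : ℝ) (Q : ℕ → ℝ) (k : ℕ) :
    conv (bernoulliPMF q) Q (k + 1) = (1 - q) * Q (k + 1) + q * Q k := by
  rw [conv, sum_range_succ', sum_range_succ']
  simp [bernoulliPMF, add_comm]

section BernoulliSum

variable {n : ℕ}

noncomputable def bernoulliSumPMF (p : Fin n → ℝ) : ℕ → ℝ :=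
  convN fun i => bernoulliPMF (p i)

lemma bernoulliSumPMF_succ (p : Fin (n + 1) → ℝ) :
    bernoulliSumPMF p = conv (bernoulliPMF (p 0)) (bernoulliSumPMF (Fin.tail p)) := by
  simp only [bernoulliSumPMF, convN, List.ofFn_succ, List.foldr_cons]
  rfl

lemma bernoulliSumPMF_eq_zero_of_lt (p : Fin n → ℝ) {k : ℕ} (hk : n < k) :
    bernoulliSumPMF p k = 0 := by
  induction n generalizing k with
  | zero => simp [bernoulliSumPMF, convN, delta0, hk.ne']
  | succ n ih =>
    obtain ⟨k, rfl⟩ := Nat.exists_eq_add_of_lt hk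
    rw [bernoulliSumPMF_succ, show n + 1 + k + 1 = (n + k + 1) + 1 by ring,
      conv_bernoulliPMF_succ, ih _ (by omega), ih _ (by omega)]
    ring

noncomputable def bernoulliSumExpect (p : Fin n → ℝ) (f : ℕ → ℝ) : ℝ :=
  ∑ k ∈ range (n + 1), bernoulliSumPMF p k * f k

lemma bernoulliSumExpect_zero (p : Fin 0 → ℝ) (f : ℕ → ℝ) : bernoulliSumExpect p f = f 0 := by
  simp [bernoulliSumExpect, bernoulliSumPMF, convN, delta0]

lemma bernoulliSumExpect_succ (p : Fin (n + 1) → ℝ) (f : ℕ → ℝ) :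
    bernoulliSumExpect p f = (1 - p 0) * bernoulliSumExpect (Fin.tail p) f +
      p 0 * bernoulliSumExpect (Fin.tail p) (fun k => f (k + 1)) := by
  set W := bernoulliSumPMF (Fin.tail p)
  have hshift : ∑ k ∈ range (n + 1), W k * f k =
      ∑ k ∈ range (n + 1), W (k + 1) * f (k + 1) + W 0 * f 0 := by
    have htop : W (n + 1) = 0 := bernoulliSumPMF_eq_zero_of_lt _ (Nat.lt_succ_self n)
    rw [← sum_range_succ' (fun k => W k * f k), sum_range_succ _ (n + 1), htop, zero_mul,
      add_zero]
  rw [bernoulliSumExpect, bernoulliSumExpect, bernoulliSumExpect, sum_range_succ', hshift,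
    bernoulliSumPMF_succ]
  simp only [conv_bernoulliPMF_succ, conv_bernoulliPMF_zero, add_mul, mul_assoc, sum_add_distrib,
    ← mul_sum]
  ring

lemma bernoulliSumExpect_add (p : Fin n → ℝ) (f g : ℕ → ℝ) :
    bernoulliSumExpect p (fun k => f k + g k) =
      bernoulliSumExpect p f + bernoulliSumExpect p g := by
  simp only [bernoulliSumExpect, mul_add, sum_add_distrib]

lemma bernoulliSumExpect_sub (p : Fin n → ℝ) (f g : ℕ → ℝ) :
    bernoulliSumExpect p (fun k => f k - g k) =
      bernoulliSumExpect p f - bernoulliSumExpect p g := by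
  simp only [bernoulliSumExpect, mul_sub, sum_sub_distrib]

lemma bernoulliSumExpect_const (p : Fin n → ℝ) (c : ℝ) :
    bernoulliSumExpect p (fun _ => c) = c := by
  induction n with
  | zero => exact bernoulliSumExpect_zero p _
  | succ n ih => rw [bernoulliSumExpect_succ, ih]; ring

lemma abs_bernoulliSumExpect_le {p : Fin n → ℝ} (hp0 : ∀ i, 0 ≤ p i) (hp1 : ∀ i, p i ≤ 1)
    {f : ℕ → ℝ} {c : ℝ} (hf : ∀ k, |f k| ≤ c) : |bernoulliSumExpect p f| ≤ c := by
  induction n generalizing f with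
  | zero => rw [bernoulliSumExpect_zero]; exact hf 0
  | succ n ih =>
    have htail0 : ∀ i, 0 ≤ Fin.tail p i := fun i => hp0 i.succ
    have htail1 : ∀ i, Fin.tail p i ≤ 1 := fun i => hp1 i.succ
    have h₁ := ih htail0 htail1 hf
    have h₂ := ih htail0 htail1 (fun k => hf (k + 1))
    have hq0 := hp0 0
    have hq1 := hp1 0
    rw [bernoulliSumExpect_succ]
    calc _ ≤ |(1 - p 0) * bernoulliSumExpect (Fin.tail p) f| +
          |p 0 * bernoulliSumExpect (Fin.tail p) (fun k => f (k + 1))| := abs_add_le _ _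
      _ ≤ (1 - p 0) * c + p 0 * c := by
          rw [abs_mul, abs_mul, abs_of_nonneg (sub_nonneg.2 hq1), abs_of_nonneg hq0]
          gcongr
      _ = c := by ring

noncomputable def steinDiscrepancy (p : Fin n → ℝ) (g : ℕ → ℝ) : ℝ :=
  (∑ i, p i) * bernoulliSumExpect p (fun k => g (k + 1)) - bernoulliSumExpect p (fun k => k * g k)

lemma steinDiscrepancy_zero (p : Fin 0 → ℝ) (g : ℕ → ℝ) : steinDiscrepancy p g = 0 := by
  simp [steinDiscrepancy, bernoulliSumExpect_zero]

lemma steinDiscrepancy_succ (p : Fin (n + 1) → ℝ) (g : ℕ → ℝ) :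
    steinDiscrepancy p g =
      p 0 ^ 2 * bernoulliSumExpect (Fin.tail p) (fun k => g (k + 2) - g (k + 1)) +
        (1 - p 0) * steinDiscrepancy (Fin.tail p) g +
        p 0 * steinDiscrepancy (Fin.tail p) (fun k => g (k + 1)) := by
  have hsplit : bernoulliSumExpect (Fin.tail p) (fun k => ((k + 1 : ℕ) : ℝ) * g (k + 1)) =
      bernoulliSumExpect (Fin.tail p) (fun k => k * g (k + 1)) +
        bernoulliSumExpect (Fin.tail p) (fun k => g (k + 1)) := by
    rw [← bernoulliSumExpect_add]
    congr 1
    funext k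
    push_cast
    ring
  simp only [steinDiscrepancy, Fin.sum_univ_succ, bernoulliSumExpect_succ p, hsplit,
    bernoulliSumExpect_sub, Fin.tail]
  ring

lemma abs_steinDiscrepancy_le {p : Fin n → ℝ} (hp0 : ∀ i, 0 ≤ p i) (hp1 : ∀ i, p i ≤ 1)
    {g : ℕ → ℝ} {c : ℝ} (hg : ∀ k, |g (k + 1) - g k| ≤ c) :
    |steinDiscrepancy p g| ≤ (∑ i, p i ^ 2) * c := by
  induction n generalizing g with
  | zero =>
    rw [steinDiscrepancy_zero, abs_zero, Fin.sum_univ_zero, zero_mul]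
  | succ n ih =>
    have htail0 : ∀ i, 0 ≤ Fin.tail p i := fun i => hp0 i.succ
    have htail1 : ∀ i, Fin.tail p i ≤ 1 := fun i => hp1 i.succ
    have hΔ := abs_bernoulliSumExpect_le (f := fun k => g (k + 2) - g (k + 1)) htail0 htail1
      (fun k => hg (k + 1))
    have h₁ := ih htail0 htail1 hg
    have h₂ := ih (g := fun k => g (k + 1)) htail0 htail1 (fun k => hg (k + 1))
    have hq0 := hp0 0
    have hq1 := hp1 0
    rw [steinDiscrepancy_succ, Fin.sum_univ_succ]
    calc _ ≤ |p 0 ^ 2 * bernoulliSumExpect (Fin.tail p) (fun k => g (k + 2) - g (k + 1))| +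
          |(1 - p 0) * steinDiscrepancy (Fin.tail p) g| +
          |p 0 * steinDiscrepancy (Fin.tail p) (fun k => g (k + 1))| := abs_add_three _ _ _
      _ ≤ p 0 ^ 2 * c + (1 - p 0) * ((∑ i, Fin.tail p i ^ 2) * c) +
          p 0 * ((∑ i, Fin.tail p i ^ 2) * c) := by
        rw [abs_mul, abs_mul, abs_mul, abs_of_nonneg (sq_nonneg _),
          abs_of_nonneg (sub_nonneg.2 hq1), abs_of_nonneg hq0]
        gcongr
      _ = (p 0 ^ 2 + ∑ i : Fin n, p i.succ ^ 2) * c := by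
        simp only [Fin.tail]
        ring

lemma steinDiscrepancy_eq_bernoulliSumExpect {p : Fin n → ℝ} {l : ℝ} (hl : ∑ i, p i = l)
    {g h : ℕ → ℝ} (hg : ∀ k, l * g (k + 1) - k * g k = h k) :
    steinDiscrepancy p g = bernoulliSumExpect p h := by
  rw [steinDiscrepancy, bernoulliSumExpect, bernoulliSumExpect, bernoulliSumExpect, mul_sum,
    ← sum_sub_distrib]
  exact sum_congr rfl fun k _ => by rw [← hg, hl]; ring

lemma bernoulliSumExpect_ite_mem (p : Fin n → ℝ) {A : Finset ℕ} (hA : A ⊆ range (n + 1)) :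
    bernoulliSumExpect p (fun k => if k ∈ A then 1 else 0) = ∑ k ∈ A, bernoulliSumPMF p k := by
  simp [bernoulliSumExpect, sum_ite_mem, inter_eq_right.2 hA]

end BernoulliSum

lemma dTV_eq_sum_filter_lt {P Q : ℕ → ℝ} {n : ℕ} {a : ℝ} (hP : ∀ k, n < k → P k = 0)
    (hPa : ∑ k ∈ range (n + 1), P k = a) (hQ0 : ∀ k, 0 ≤ Q k) (hQ : HasSum Q a) :
    dTV P Q = ∑ k ∈ range (n + 1) with Q k < P k, (P k - Q k) := by
  have hout (k : ℕ) (hk : k ∉ range (n + 1)) : P k = 0 := hP k (by simpa using hk)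
  have hdiff : HasSum (fun k => P k - Q k) 0 := by
    simpa [hPa] using (hasSum_sum_of_ne_finset_zero hout).sub hQ
  have hpos : HasSum (fun k => if Q k < P k then P k - Q k else 0)
      (∑ k ∈ range (n + 1) with Q k < P k, (P k - Q k)) := by
    rw [sum_filter]
    exact hasSum_sum_of_ne_finset_zero fun k hk => if_neg (by simp [hout k hk, hQ0 k])
  have habs : HasSum (fun k => |P k - Q k|)
      (2 * ∑ k ∈ range (n + 1) with Q k < P k, (P k - Q k)) := by
    have habs_eq : (fun k => |P k - Q k|) =
        fun k => 2 * (if Q k < P k then P k - Q k else 0) - (P k - Q k) := by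
      funext k
      split_ifs with h
      · rw [abs_of_pos (sub_pos.2 h)]; ring
      · rw [abs_of_nonpos (by linarith [not_lt.1 h])]; ring
    simpa [habs_eq] using (hpos.mul_left 2).sub hdiff
  rw [dTV, habs.tsum_eq]
  ring

lemma one_sub_exp_neg_div_le_inv_max {l : ℝ} (hl : 0 < l) :
    (1 - Real.exp (-l)) / l ≤ (max 1 l)⁻¹ := by
  rcases le_total l 1 with h | h
  · rw [max_eq_left h, inv_one, div_le_one hl]
    linarith [Real.add_one_le_exp (-l)]
  · rw [max_eq_right h, div_eq_mul_inv]
    exact mul_le_of_le_one_left (inv_nonneg.2 hl.le) (by linarith [Real.exp_pos (-l)])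

/-- Le Cam / Barbour–Hall type Poisson approximation bound for sums of
independent Bernoulli random variables. -/
theorem poisson_approx_bernoulli (n : ℕ) (p : Fin n → ℝ)
    (hp0 : ∀ i, 0 ≤ p i) (hp1 : ∀ i, p i ≤ 1)
    (l : ℝ) (hl : l = ∑ i, p i) (hlpos : 0 < l) :
    dTV (convN (fun i k => if k = 0 then 1 - p i else if k = 1 then p i else 0))
        (poissonPMF l) ≤ (∑ i, (p i) ^ 2) / max 1 l := by
  let A := {k ∈ range (n + 1) | poissonPMF l k < bernoulliSumPMF p k}
  let g k := ∑ i ∈ A, steinSolution l i k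
  have hdisc : steinDiscrepancy p g = ∑ k ∈ A, (bernoulliSumPMF p k - poissonPMF l k) := by
    rw [steinDiscrepancy_eq_bernoulliSumExpect hl.symm (mul_sum_steinSolution_succ_sub hlpos A),
      bernoulliSumExpect_sub, bernoulliSumExpect_const,
      bernoulliSumExpect_ite_mem p (A := A) (filter_subset _ _), sum_sub_distrib]
  calc dTV (bernoulliSumPMF p) (poissonPMF l)
      = ∑ k ∈ A, (bernoulliSumPMF p k - poissonPMF l k) :=
        dTV_eq_sum_filter_lt (fun _ => bernoulliSumPMF_eq_zero_of_lt p)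
          (by simpa [bernoulliSumExpect] using bernoulliSumExpect_const p 1)
          (fun k => (poissonPMF_pos hlpos k).le) (hasSum_poissonPMF hlpos.le)
    _ = steinDiscrepancy p g := hdisc.symm
    _ ≤ (∑ i, p i ^ 2) * ((1 - Real.exp (-l)) / l) :=
        (le_abs_self _).trans
          (abs_steinDiscrepancy_le hp0 hp1 (abs_sum_steinSolution_sub_le hlpos A))
    _ ≤ (∑ i, p i ^ 2) / max 1 l :=
        mul_le_mul_of_nonneg_left (one_sub_exp_neg_div_le_inv_max hlpos)
          (sum_nonneg fun i _ => sq_nonneg (p i))
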